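/- arXiv:2010.07922 — 4 statements merged into one kernel-verified Lean document; each statement's English description precedes it below -/
import Mathlib

section
/- Let $X$, $Y$, $Y^R$, $S$ be random variables on a common probability space, where $S$ ranges over a set $\mathcal{S}$, and for each $s \in \mathcal{S}$ let $p^{do(s)}$ denote the joint distribution under the intervention $S = s$. Assume (i) the conditional distribution of $Y$ given $Y^R$ is the same under all interventions $p^{do(s)}$, i.e. $p^{do(s_i)}(Y \mid Y^R) = p^{do(s_j)}(Y \mid Y^R)$ for all $s_i, s_j \in \mathcal{S}$; (ii) $Y$ is conditionally independent of $f(X)$ given $Y^R$ under every $p^{do(s)}$; and (iii) $f(X)$ is an invariant representation for $Y^R$, i.e. $p^{do(s_i)}(Y^R \mid f(X)) = p^{do(s_j)}(Y^R \mid f(X))$ for all $s_i, s_j \in \mathcal{S}$. Then $f(X)$ is an invariant representation for $Y$: $p^{do(s_i)}(Y \mid f(X)) = p^{do(s_j)}(Y \mid f(X))$ for all $s_i, s_j \in \mathcal{S}$. -/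
open Finset

lemma stmt_1_key {S 𝒴 𝓡 𝓩 : Type*} [Fintype 𝒴] [Fintype 𝓡] [Fintype 𝓩]
    (P : S → 𝒴 → 𝓡 → 𝓩 → ℝ)
    (hnonneg : ∀ s y r z, 0 ≤ P s y r z)
    (hii : ∀ s : S, ∀ (y : 𝒴) (r : 𝓡) (z : 𝓩),
      P s y r z * (∑ y', ∑ z', P s y' r z')
        = (∑ z', P s y r z') * (∑ y', P s y' r z))
    (s : S) (y : 𝒴) (z : 𝓩) :
    (∑ r, P s y r z) / (∑ y', ∑ r, P s y' r z)
      = ∑ r, ((∑ z', P s y r z') / (∑ y', ∑ z', P s y' r z'))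
          * ((∑ y', P s y' r z) / (∑ y', ∑ r', P s y' r' z)) := by
  set D := ∑ y', ∑ r', P s y' r' z with hD
  by_cases hDz : D = 0
  · have hzero : ∀ y' r', P s y' r' z = 0 := by
      intro y' r'
      have h1 : ∀ i ∈ (univ : Finset 𝒴), 0 ≤ ∑ r', P s i r' z := fun i _ =>
        Finset.sum_nonneg fun j _ => hnonneg s i j z
      have h2 := (Finset.sum_eq_zero_iff_of_nonneg h1).1 hDz y' (mem_univ _)
      have h3 : ∀ j ∈ (univ : Finset 𝓡), 0 ≤ P s y' j z := fun j _ => hnonneg s y' j z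
      exact (Finset.sum_eq_zero_iff_of_nonneg h3).1 h2 r' (mem_univ _)
    have hnum : (∑ r, P s y r z) = 0 := Finset.sum_eq_zero fun r _ => hzero y r
    rw [hnum, hDz, zero_div]
    symm
    apply Finset.sum_eq_zero
    intro r _
    have : (∑ y', P s y' r z) = 0 := Finset.sum_eq_zero fun y' _ => hzero y' r
    rw [this, zero_div, mul_zero]
  · rw [Finset.sum_div]
    apply Finset.sum_congr rfl
    intro r _
    set A := ∑ y', ∑ z', P s y' r z' with hA
    set B := ∑ z', P s y r z' with hB
    set C := ∑ y', P s y' r z with hC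
    by_cases hAz : A = 0
    · have hzero : ∀ y' z', P s y' r z' = 0 := by
        intro y' z'
        have h1 : ∀ i ∈ (univ : Finset 𝒴), 0 ≤ ∑ z', P s i r z' := fun i _ =>
          Finset.sum_nonneg fun j _ => hnonneg s i r j
        have h2 := (Finset.sum_eq_zero_iff_of_nonneg h1).1 hAz y' (mem_univ _)
        have h3 : ∀ j ∈ (univ : Finset 𝓩), 0 ≤ P s y' r j := fun j _ => hnonneg s y' r j
        exact (Finset.sum_eq_zero_iff_of_nonneg h3).1 h2 z' (mem_univ _)
      rw [hzero y z, hAz, div_zero, zero_div, zero_mul]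
    · have h := hii s y r z
      rw [← hA, ← hB, ← hC] at h
      rw [div_mul_div_comm, ← h, mul_comm (P s y r z) A,
        mul_div_mul_left _ _ hAz]

/-- Theorem 1 of the paper (discrete version).  `P s y r z` is the joint probability
mass of `(Y, Y^R, f(X)) = (y, r, z)` under the interventional distribution `p^{do(s)}`.
If (i) `p^{do(s)}(Y | Y^R)` is the same for all interventions, (ii) `Y ⟂ f(X) | Y^R`
under each `p^{do(s)}`, and (iii) `f(X)` is an invariant representation for `Y^R`,
then `f(X)` is an invariant representation for `Y`. -/
theorem stmt_1 {S 𝒴 𝓡 𝓩 : Type*} [Fintype 𝒴] [Fintype 𝓡] [Fintype 𝓩]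
    (P : S → 𝒴 → 𝓡 → 𝓩 → ℝ)
    (hnonneg : ∀ s y r z, 0 ≤ P s y r z)
    (hsum : ∀ s, ∑ y, ∑ r, ∑ z, P s y r z = 1)
    -- (i) invariance of `p(Y | Y^R)`
    (hi : ∀ s₁ s₂ : S, ∀ (y : 𝒴) (r : 𝓡),
      (∑ z, P s₁ y r z) / (∑ y', ∑ z, P s₁ y' r z)
        = (∑ z, P s₂ y r z) / (∑ y', ∑ z, P s₂ y' r z))
    -- (ii) conditional independence `Y ⟂ f(X) | Y^R` under each `p^{do(s)}`
    (hii : ∀ s : S, ∀ (y : 𝒴) (r : 𝓡) (z : 𝓩),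
      P s y r z * (∑ y', ∑ z', P s y' r z')
        = (∑ z', P s y r z') * (∑ y', P s y' r z))
    -- (iii) invariance of `p(Y^R | f(X))`
    (hiii : ∀ s₁ s₂ : S, ∀ (r : 𝓡) (z : 𝓩),
      (∑ y, P s₁ y r z) / (∑ y, ∑ r', P s₁ y r' z)
        = (∑ y, P s₂ y r z) / (∑ y, ∑ r', P s₂ y r' z)) :
    -- conclusion: invariance of `p(Y | f(X))`
    ∀ s₁ s₂ : S, ∀ (y : 𝒴) (z : 𝓩),
      (∑ r, P s₁ y r z) / (∑ y', ∑ r, P s₁ y' r z)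
        = (∑ r, P s₂ y r z) / (∑ y', ∑ r, P s₂ y' r z) := by
  intro s₁ s₂ y z
  rw [stmt_1_key P hnonneg hii s₁ y z, stmt_1_key P hnonneg hii s₂ y z]
  apply Finset.sum_congr rfl
  intro r _
  rw [hi s₁ s₂ y r, hiii s₁ s₂ r z]
end

section
/- (Erdős–Rényi connectivity.) Let $G(n, p)$ be the Erdős–Rényi random graph on $n$ vertices where each edge appears independently with probability $p = c \log n / n$ for a fixed constant $c > 1$. Then the probability that $G(n,p)$ is connected tends to $1$ as $n \to \infty$. -/
open MeasureTheory Filter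

/-- The Erdős–Rényi measure on edge-indicator functions: each potential edge (an
element of `Sym2 (Fin n)`) is present independently with probability `p`
(clamped to `[0,1]`). -/
noncomputable def erMeasure (n : ℕ) (p : ℝ) : Measure (Sym2 (Fin n) → Bool) :=
  Measure.pi fun _ =>
    (PMF.bernoulli (min (Real.toNNReal p) 1) (min_le_right _ _)).toMeasure

/-- The simple graph determined by an edge-indicator function. -/
def graphOf {n : ℕ} (ω : Sym2 (Fin n) → Bool) : SimpleGraph (Fin n) :=
  SimpleGraph.fromRel fun u v => ω s(u, v) = true

/-!
A disconnected graph on `n` vertices has a vertex set `S` with `1 ≤ |S| ≤ n / 2` and no edge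
leaving it; the `|S| (n - |S|)` edges leaving a fixed `S` are all absent with probability at most
`exp (-p |S| (n - |S|))`. A union bound over `S` therefore gives
`P(disconnected) ≤ ∑_{k=1}^{n/2} C(n,k) exp (-p k (n - k))`.

For `p = c log n / n` the `k`-th term is at most `y_n ^ k` with `y_n = A n^{-(c-1)/2} → 0`, so the
sum is at most `2 y_n`. Below `k = (c-1) n / (2c)` this follows from `C(n,k) ≤ n^k`, since then
`p k (n - k) ≥ (c+1)/2 · k log n`; above it, `C(n,k) ≤ 2^n ≤ A^k` with `A = 2^{2c/(c-1)}`, and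
`p k (n - k) ≥ c/2 · k log n` because `k ≤ n / 2`.
-/

open Finset Real

namespace SimpleGraph

variable {V : Type*} {G : SimpleGraph V}

lemma exists_small_isolated_finset_of_not_connected [Fintype V] [Nonempty V]
    (h : ¬ G.Connected) :
    ∃ S : Finset V, S.Nonempty ∧ 2 * #S ≤ Fintype.card V ∧ ∀ u ∈ S, ∀ v ∉ S, ¬ G.Adj u v := by
  classical
  obtain ⟨v, w, hvw⟩ : ∃ v w, ¬ G.Reachable v w := by
    simpa [connected_iff, Preconnected] using h
  set S := univ.filter (G.Reachable v)
  have hS : ∀ u ∈ S, ∀ x ∉ S, ¬ G.Adj u x := fun u hu x hx hux =>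
    hx (by simpa [S] using (mem_filter.1 hu).2.trans hux.reachable)
  by_cases hsmall : 2 * #S ≤ Fintype.card V
  · exact ⟨S, ⟨v, by simp [S]⟩, hsmall, hS⟩
  · refine ⟨Sᶜ, ⟨w, by simpa [S] using hvw⟩, by rw [card_compl]; omega, ?_⟩
    intro u hu x hx hux
    exact hS x (by simpa using hx) u (by simpa using hu) hux.symm

end SimpleGraph

section CutEdges

variable {V : Type*} [DecidableEq V] [Fintype V]

def cutEdges (S : Finset V) : Finset (Sym2 V) :=
  (S ×ˢ Sᶜ).image fun a => s(a.1, a.2)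

lemma card_cutEdges (S : Finset V) :
    #(cutEdges S) = #S * (Fintype.card V - #S) := by
  rw [cutEdges, card_image_of_injOn, card_product, card_compl]
  rintro ⟨u, v⟩ huv ⟨u', v'⟩ huv' h
  simp only [coe_product, Set.mem_prod, mem_coe, mem_compl] at huv huv'
  rcases Sym2.eq_iff.1 h with ⟨rfl, rfl⟩ | ⟨rfl, rfl⟩
  · rfl
  · exact absurd huv.1 huv'.2

end CutEdges

instance (n : ℕ) (p : ℝ) : IsProbabilityMeasure (erMeasure n p) := by
  unfold erMeasure; infer_instance

lemma erMeasure_forall_eq_false_le (n : ℕ) (p : ℝ) (A : Finset (Sym2 (Fin n))) :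
    erMeasure n p {ω | ∀ e ∈ A, ω e = false} ≤ ENNReal.ofReal (exp (-(p * #A))) := by
  have hpi : {ω : Sym2 (Fin n) → Bool | ∀ e ∈ A, ω e = false} = (A : Set _).pi fun _ => {false} := by
    ext ω; simp
  rw [hpi, erMeasure, Measure.pi_pi_finset, prod_const, mul_comm, neg_mul_eq_mul_neg, exp_nat_mul,
    ENNReal.ofReal_pow (exp_nonneg _)]
  gcongr
  rw [PMF.toMeasure_apply_singleton _ _ (measurableSet_singleton _)]
  -- `PMF.bernoulli q` gives `false` the mass `1 - q`
  change ((1 - min p.toNNReal 1 : NNReal) : ENNReal) ≤ _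
  rw [ENNReal.ofReal, ENNReal.coe_le_coe, Real.le_toNNReal_iff_coe_le (exp_nonneg _),
    NNReal.coe_sub (min_le_right _ _), NNReal.coe_min, Real.coe_toNNReal', NNReal.coe_one]
  have h1 := add_one_le_exp (-p)
  have h2 := exp_pos (-p)
  rcases le_total p 0 with hp | hp
  · rw [max_eq_right hp, min_eq_left zero_le_one]; linarith
  · rw [max_eq_left hp]
    rcases min_cases p 1 with ⟨h, _⟩ | ⟨h, _⟩ <;> rw [h] <;> linarith

lemma exists_cutEdges_eq_false_of_not_connected {n : ℕ} (hn : 0 < n) (ω : Sym2 (Fin n) → Bool)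
    (h : ¬ (graphOf ω).Connected) :
    ∃ S : Finset (Fin n), S.Nonempty ∧ 2 * #S ≤ n ∧ ∀ e ∈ cutEdges S, ω e = false := by
  have : Nonempty (Fin n) := ⟨⟨0, hn⟩⟩
  obtain ⟨S, hS, hcard, hcut⟩ := SimpleGraph.exists_small_isolated_finset_of_not_connected h
  refine ⟨S, hS, by simpa using hcard, ?_⟩
  simp only [cutEdges, mem_image, mem_product, mem_compl]
  rintro _ ⟨⟨u, v⟩, ⟨hu, hv⟩, rfl⟩
  have huv : u ≠ v := by rintro rfl; exact hv hu
  by_contra hne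
  exact hcut u hu v hv ⟨huv, .inl (by simpa using hne)⟩

lemma erMeasure_not_connected_le {n : ℕ} (hn : 0 < n) (p : ℝ) :
    erMeasure n p {ω | ¬ (graphOf ω).Connected} ≤
      ENNReal.ofReal (∑ k ∈ Icc 1 (n / 2), (n.choose k : ℝ) * exp (-(p * (k * (n - k))))) := by
  have hsub : {ω : Sym2 (Fin n) → Bool | ¬ (graphOf ω).Connected} ⊆
      ⋃ k ∈ Icc 1 (n / 2), ⋃ S ∈ powersetCard k univ, {ω | ∀ e ∈ cutEdges S, ω e = false} := by
    intro ω hω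
    obtain ⟨S, hS, hcard, hcut⟩ := exists_cutEdges_eq_false_of_not_connected hn ω hω
    simp only [Set.mem_iUnion, mem_Icc, mem_powersetCard_univ]
    exact ⟨#S, ⟨hS.card_pos, by omega⟩, S, rfl, hcut⟩
  have hcut (k : ℕ) (hk : k ∈ Icc 1 (n / 2)) (S : Finset (Fin n)) (hS : S ∈ powersetCard k univ) :
      erMeasure n p {ω | ∀ e ∈ cutEdges S, ω e = false} ≤
        ENNReal.ofReal (exp (-(p * (k * (n - k))))) := by
    have hkn : k ≤ n := (mem_Icc.1 hk).2.trans (Nat.div_le_self n 2)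
    convert erMeasure_forall_eq_false_le n p (cutEdges S) using 5
    rw [card_cutEdges, Fintype.card_fin, mem_powersetCard_univ.1 hS, Nat.cast_mul,
      Nat.cast_sub hkn]
  calc erMeasure n p {ω | ¬ (graphOf ω).Connected}
      ≤ ∑ k ∈ Icc 1 (n / 2), ∑ S ∈ powersetCard k univ,
          erMeasure n p {ω | ∀ e ∈ cutEdges S, ω e = false} :=
        (measure_mono hsub).trans <| (measure_biUnion_finset_le _ _).trans <|
          sum_le_sum fun _ _ => measure_biUnion_finset_le _ _
    _ ≤ ∑ k ∈ Icc 1 (n / 2), ∑ S ∈ powersetCard k (univ : Finset (Fin n)),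
          ENNReal.ofReal (exp (-(p * (k * (n - k))))) :=
        sum_le_sum fun k hk => sum_le_sum fun S hS => hcut k hk S hS
    _ = _ := by
        rw [ENNReal.ofReal_sum_of_nonneg fun _ _ => by positivity]
        simp [ENNReal.ofReal_mul]

lemma geom_sum_Icc_one_le_two_mul {x : ℝ} (hx₀ : 0 ≤ x) (hx : x ≤ 1 / 2) (m : ℕ) :
    ∑ k ∈ Icc 1 m, x ^ k ≤ 2 * x := by
  have hx₁ : x < 1 := by linarith
  calc ∑ k ∈ Icc 1 m, x ^ k ≤ x ^ 1 / (1 - x) := by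
        rw [← Ico_add_one_right_eq_Icc]; exact geom_sum_Ico_le_of_lt_one hx₀ hx₁
    _ ≤ 2 * x := by rw [pow_one, div_le_iff₀ (by linarith)]; nlinarith

lemma choose_mul_exp_neg_le {c : ℝ} (hc : 1 < c) {n k : ℕ} (hk : 2 * k ≤ n) :
    (n.choose k : ℝ) * exp (-(c * log n / n * (k * (n - k)))) ≤
      ((2 : ℝ) ^ (2 * c / (c - 1)) * exp (-((c - 1) / 2 * log n))) ^ k := by
  rcases k.eq_zero_or_pos with rfl | hk₀
  · simp
  set L := log n
  set E := c * L / n * (k * (n - k))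
  set A : ℝ := 2 ^ (2 * c / (c - 1))
  have hn : (0 : ℝ) < n := by norm_cast; omega
  have hL : 0 ≤ L := log_natCast_nonneg n
  have hkn : (2 * k : ℝ) ≤ n := by exact_mod_cast hk
  have hA : 1 ≤ A := one_le_rpow one_le_two (div_nonneg (by linarith) (by linarith))
  suffices h : (n.choose k : ℝ) ≤ A ^ k * exp (E - (c - 1) / 2 * k * L) by
    calc (n.choose k : ℝ) * exp (-E) ≤ A ^ k * exp (E - (c - 1) / 2 * k * L) * exp (-E) := by
          gcongr
      _ = (A * exp (-((c - 1) / 2 * L))) ^ k := by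
          rw [mul_pow, ← exp_nat_mul, mul_assoc, ← exp_add]; ring_nf
  have hkL : 0 ≤ (k : ℝ) * L := by positivity
  rcases le_or_gt ((c - 1) * n) (2 * c * k) with hlarge | hsmall
  · have hE : (c - 1) / 2 * k * L ≤ E := by
      rw [show E = c * L * (k * (n - k)) / n by ring, le_div_iff₀ hn]
      nlinarith [mul_nonneg (mul_nonneg (by linarith : (0 : ℝ) ≤ c) hkL)
        (by linarith : (0 : ℝ) ≤ n - k - n / 2)]
    calc (n.choose k : ℝ) ≤ 2 ^ n := by exact_mod_cast Nat.choose_le_two_pow n k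
      _ ≤ A ^ k := by
          rw [← rpow_natCast, ← rpow_natCast, ← rpow_mul zero_le_two]
          refine rpow_le_rpow_of_exponent_le one_le_two ?_
          rw [div_mul_eq_mul_div, le_div_iff₀ (by linarith)]
          linarith
      _ ≤ A ^ k * exp (E - (c - 1) / 2 * k * L) :=
          le_mul_of_one_le_right (by positivity) (one_le_exp (by linarith))
  · have hE : (1 + (c - 1) / 2) * k * L ≤ E := by
      rw [show E = c * L * (k * (n - k)) / n by ring, le_div_iff₀ hn]
      nlinarith [mul_nonneg hkL (by linarith : (0 : ℝ) ≤ (c - 1) * n - 2 * c * k)]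
    calc (n.choose k : ℝ) ≤ (n : ℝ) ^ k := by exact_mod_cast Nat.choose_le_pow n k
      _ = exp (k * L) := by rw [exp_nat_mul, exp_log hn]
      _ ≤ exp (E - (c - 1) / 2 * k * L) := exp_le_exp.2 (by linarith)
      _ ≤ A ^ k * exp (E - (c - 1) / 2 * k * L) :=
          le_mul_of_one_le_left (exp_nonneg _) (one_le_pow₀ hA)

lemma tendsto_sum_choose_mul_exp_neg {c : ℝ} (hc : 1 < c) :
    Tendsto (fun n : ℕ => ∑ k ∈ Icc 1 (n / 2),
      (n.choose k : ℝ) * exp (-(c * log n / n * (k * (n - k))))) atTop (nhds 0) := by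
  set y : ℕ → ℝ := fun n => 2 ^ (2 * c / (c - 1)) * exp (-((c - 1) / 2 * log n))
  have hy : Tendsto y atTop (nhds 0) := by
    have hlog := (tendsto_log_atTop.comp tendsto_natCast_atTop_atTop).const_mul_atTop
      (by linarith : 0 < (c - 1) / 2)
    simpa using (tendsto_exp_atBot.comp (tendsto_neg_atTop_atBot.comp hlog)).const_mul
      ((2 : ℝ) ^ (2 * c / (c - 1)))
  have hbound : ∀ᶠ n : ℕ in atTop, ∑ k ∈ Icc 1 (n / 2),
      (n.choose k : ℝ) * exp (-(c * log n / n * (k * (n - k)))) ≤ 2 * y n := by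
    filter_upwards [hy.eventually (eventually_le_nhds (by norm_num : (0 : ℝ) < 1 / 2))] with n hn
    calc _ ≤ ∑ k ∈ Icc 1 (n / 2), y n ^ k :=
          sum_le_sum fun k hk => choose_mul_exp_neg_le hc (by have := (mem_Icc.1 hk).2; omega)
      _ ≤ 2 * y n := geom_sum_Icc_one_le_two_mul (by positivity) hn _
  refine squeeze_zero' (Eventually.of_forall fun n => sum_nonneg fun k _ => by positivity) hbound ?_
  simpa using hy.const_mul 2

/-- Erdős–Rényi connectivity: for `p = c log n / n` with `c > 1`, the probability
that `G(n,p)` is connected tends to `1` as `n → ∞`. -/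
theorem stmt_8 (c : ℝ) (hc : 1 < c) :
    Tendsto
      (fun n : ℕ =>
        erMeasure n (c * Real.log n / n) {ω | (graphOf ω).Connected})
      atTop (nhds 1) := by
  have hdisconnected : Tendsto (fun n : ℕ =>
      erMeasure n (c * log n / n) {ω | ¬ (graphOf ω).Connected}) atTop (nhds 0) := by
    have hbound := ENNReal.tendsto_ofReal (tendsto_sum_choose_mul_exp_neg hc)
    rw [ENNReal.ofReal_zero] at hbound
    refine tendsto_of_tendsto_of_tendsto_of_le_of_le' tendsto_const_nhds hbound
      (Eventually.of_forall fun _ => zero_le) ?_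
    filter_upwards [eventually_gt_atTop 0] with n hn using erMeasure_not_connected_le hn _
  have hcompl (n : ℕ) (p : ℝ) : erMeasure n p {ω | (graphOf ω).Connected} =
      1 - erMeasure n p {ω | ¬ (graphOf ω).Connected} := by
    rw [← prob_compl_eq_one_sub (Set.toFinite _).measurableSet]
    congr 1; ext; simp
  simp_rw [hcompl]
  simpa using ENNReal.Tendsto.sub tendsto_const_nhds hdisconnected (.inl ENNReal.one_ne_top)
end

section
/- Let $G(n,p)$ be the Erdős–Rényi random graph. If $p^2 n \ge \log(n^2/c)$ for a constant $c > 0$ (i.e., taking $d = 2$ in the general diameter theorem), then with probability at least $1 - e^{-c/2} - o(1)$ the diameter of $G(n,p)$ is at most $3$. -/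
open MeasureTheory Filter

/-!
Fix `u ≠ v` and split the remaining vertices into two halves `W` and `X`. If there is no path
`u - w - x - v` with `w ∈ W`, `x ∈ X`, then, writing `S` for the neighbours of `u` in `W` and `T`
for those of `v` in `X`, there is no edge between `S` and `T`. These edge patterns are cylinder
events of probability `p^|S| (1-p)^(|W|-|S|) · p^|T| (1-p)^(|X|-|T|) · (1-p)^(|S||T|)`; summing
over `S` and `T` bounds the failure probability for the pair by
`exp(-|W| p (1 - e^{-|X| p²/2})) + e^{-|X| p/2}`, which is at most `2 e^{-√n/8}` once `p² n ≥ 8`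
(eventually true, as `log (n²/c) → ∞`). A union bound over the `n²` pairs shows that diameter
`≤ 3` fails with probability `O(n² e^{-√n/8}) → 0`.
-/

open Finset Real

namespace ErdosRenyi

variable {n : ℕ} {p : ℝ}

def bernoulliWeight (p : ℝ) (b : Bool) : ℝ := if b then p else 1 - p

lemma bernoulliWeight_nonneg (hp0 : 0 ≤ p) (hp1 : p ≤ 1) (b : Bool) :
    0 ≤ bernoulliWeight p b := by
  cases b <;> simp [bernoulliWeight] <;> linarith

lemma bernoulli_toMeasure_singleton (hp0 : 0 ≤ p) (hp1 : p ≤ 1) (b : Bool) :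
    (PMF.bernoulli (min p.toNNReal 1) (min_le_right _ _)).toMeasure {b}
      = ENNReal.ofReal (bernoulliWeight p b) := by
  rw [PMF.toMeasure_apply_singleton _ _ (measurableSet_singleton _), PMF.bernoulli_apply,
    min_eq_left (Real.toNNReal_le_one.2 hp1)]
  cases b
  · change 1 - ENNReal.ofReal p = ENNReal.ofReal (1 - p)
    rw [← ENNReal.ofReal_one, ENNReal.ofReal_sub _ hp0]
  · simp [bernoulliWeight, ENNReal.ofReal]

lemma measureReal_pi_bernoulli_cylinder {ι : Type*} [Fintype ι] (hp0 : 0 ≤ p) (hp1 : p ≤ 1)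
    (E : Finset ι) (σ : ι → Bool) :
    (Measure.pi fun _ : ι => (PMF.bernoulli (min p.toNNReal 1) (min_le_right _ _)).toMeasure).real
      {ω | ∀ e ∈ E, ω e = σ e} = ∏ e ∈ E, bernoulliWeight p (σ e) := by
  classical
  have hpi : {ω : ι → Bool | ∀ e ∈ E, ω e = σ e} =
      Set.univ.pi fun e => if e ∈ E then {σ e} else Set.univ := by
    ext ω
    simp only [Set.mem_ofPred_eq, Set.mem_pi, Set.mem_univ, true_implies]
    refine forall_congr' fun e => ?_
    split_ifs <;> simp [*]
  have hfactor : ∀ e, (PMF.bernoulli (min p.toNNReal 1) (min_le_right _ _)).toMeasure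
      (if e ∈ E then {σ e} else Set.univ)
        = if e ∈ E then ENNReal.ofReal (bernoulliWeight p (σ e)) else 1 := by
    intro e
    split_ifs
    exacts [bernoulli_toMeasure_singleton hp0 hp1 _, measure_univ]
  rw [measureReal_def, hpi, Measure.pi_pi, prod_congr rfl fun e _ => hfactor e, prod_ite_mem,
    univ_inter, ENNReal.toReal_prod]
  exact prod_congr rfl fun e _ => ENNReal.toReal_ofReal (bernoulliWeight_nonneg hp0 hp1 _)

lemma prod_bernoulliWeight_decide_mem {α : Type*} [DecidableEq α] (p : ℝ) {S W : Finset α}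
    (hS : S ⊆ W) :
    ∏ w ∈ W, bernoulliWeight p (decide (w ∈ S)) = p ^ #S * (1 - p) ^ (#W - #S) := by
  simp only [bernoulliWeight, decide_eq_true_eq]
  rw [prod_ite, filter_mem_eq_inter, inter_eq_right.2 hS, filter_notMem_eq_sdiff,
    prod_const, prod_const, card_sdiff_of_subset hS]

lemma one_sub_pow_le_exp_neg {a : ℝ} (ha : a ≤ 1) (m : ℕ) : (1 - a) ^ m ≤ exp (-(m * a)) := by
  rw [← mul_neg, exp_nat_mul]
  exact pow_le_pow_left₀ (by linarith) (one_sub_le_exp_neg a) m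

lemma exp_neg_le_one_sub_half {x : ℝ} (hx0 : 0 ≤ x) (hx1 : x ≤ 1) : exp (-x) ≤ 1 - x / 2 := by
  rw [exp_neg, inv_le_comm₀ (exp_pos x) (by linarith), inv_le_iff_one_le_mul₀ (by linarith)]
  nlinarith [add_one_le_exp x]

lemma mul_one_sub_pow_add_one_sub_pow_le (hp0 : 0 ≤ p) (hp1 : p ≤ 1) (s m : ℕ) :
    (p * (1 - p) ^ s + (1 - p)) ^ m ≤ exp (-(m * p ^ 2 / 2)) ^ s + exp (-(m * p / 2)) := by
  have hqs : (1 - p) ^ s ≤ exp (-(p * s)) := by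
    simpa [mul_comm] using one_sub_pow_le_exp_neg hp1 s
  have hpow : (p * (1 - p) ^ s + (1 - p)) ^ m ≤ exp (-(m * (p * (1 - (1 - p) ^ s)))) := by
    rw [show p * (1 - p) ^ s + (1 - p) = 1 - p * (1 - (1 - p) ^ s) by ring]
    exact one_sub_pow_le_exp_neg (by nlinarith [pow_nonneg (sub_nonneg.2 hp1) s]) m
  have hmp : 0 ≤ (m : ℝ) * p := by positivity
  rcases le_total (p * s) 1 with hps | hps
  · have hA : p * s / 2 ≤ 1 - (1 - p) ^ s := by
      linarith [exp_neg_le_one_sub_half (by positivity) hps]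
    have : exp (-(m * (p * (1 - (1 - p) ^ s)))) ≤ exp (-(m * p ^ 2 / 2)) ^ s := by
      rw [← exp_nat_mul]
      gcongr
      nlinarith
    linarith [exp_pos (-(m * p / 2))]
  · have hA : 1 / 2 ≤ 1 - (1 - p) ^ s := by
      linarith [exp_neg_le_one_sub_half zero_le_one le_rfl, exp_le_exp.2 (neg_le_neg hps)]
    have : exp (-(m * (p * (1 - (1 - p) ^ s)))) ≤ exp (-(m * p / 2)) := by
      gcongr
      nlinarith
    linarith [pow_nonneg (exp_pos (-(m * p ^ 2 / 2))).le s]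

noncomputable def noPathBound (p : ℝ) (k m : ℕ) : ℝ :=
  exp (-(k * p * (1 - exp (-(m * p ^ 2 / 2))))) + exp (-(m * p / 2))

lemma sum_powerset_powerset_le {α : Type*} (hp0 : 0 ≤ p) (hp1 : p ≤ 1) (W X : Finset α) :
    ∑ S ∈ W.powerset, ∑ T ∈ X.powerset,
        p ^ #S * (1 - p) ^ (#W - #S) * (p ^ #T * (1 - p) ^ (#X - #T)) * (1 - p) ^ (#S * #T)
      ≤ noPathBound p #W #X := by
  set ε := exp (-(#X * p ^ 2 / 2))
  set δ := exp (-(#X * p / 2))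
  have hinner : ∀ S : Finset α, ∑ T ∈ X.powerset,
      p ^ #S * (1 - p) ^ (#W - #S) * (p ^ #T * (1 - p) ^ (#X - #T)) * (1 - p) ^ (#S * #T)
        = p ^ #S * (1 - p) ^ (#W - #S) * (p * (1 - p) ^ #S + (1 - p)) ^ #X := by
    intro S
    rw [← sum_pow_mul_eq_add_pow, mul_sum]
    refine sum_congr rfl fun T _ => ?_
    rw [mul_pow, ← pow_mul]
    ring
  have hsplit : ∀ S : Finset α, p ^ #S * (1 - p) ^ (#W - #S) * (ε ^ #S + δ)
      = (p * ε) ^ #S * (1 - p) ^ (#W - #S) + δ * (p ^ #S * (1 - p) ^ (#W - #S)) :=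
    fun S => by ring
  have hε : ε ≤ 1 := exp_le_one_iff.2 (by simp only [neg_nonpos]; positivity)
  calc _ = ∑ S ∈ W.powerset, p ^ #S * (1 - p) ^ (#W - #S) * (p * (1 - p) ^ #S + (1 - p)) ^ #X :=
        sum_congr rfl fun S _ => hinner S
    _ ≤ ∑ S ∈ W.powerset, p ^ #S * (1 - p) ^ (#W - #S) * (ε ^ #S + δ) :=
        sum_le_sum fun S _ => mul_le_mul_of_nonneg_left
          (mul_one_sub_pow_add_one_sub_pow_le hp0 hp1 _ _)
          (mul_nonneg (pow_nonneg hp0 _) (pow_nonneg (by linarith) _))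
    _ = (1 - p * (1 - ε)) ^ #W + δ := by
        simp_rw [hsplit, sum_add_distrib, ← mul_sum, sum_pow_mul_eq_add_pow, add_sub_cancel,
          one_pow, mul_one]
        ring
    _ ≤ exp (-(#W * (p * (1 - ε)))) + δ := by
        gcongr
        exact one_sub_pow_le_exp_neg (by nlinarith [exp_pos (-(#X * p ^ 2 / 2))]) _
    _ = noPathBound p #W #X := by simp only [noPathBound, ε, δ, mul_assoc]

lemma noPathBound_le (hp : 0 ≤ p) {N : ℝ} (hN : 0 ≤ N) {k m : ℕ} (hpN : 8 ≤ p ^ 2 * N)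
    (hk : N ≤ 4 * k) (hm : N ≤ 4 * m) :
    noPathBound p k m ≤ 2 * exp (-(√N / 8)) := by
  have hsqrt : √N ≤ N * p := Real.sqrt_le_iff.2 ⟨by positivity, by nlinarith⟩
  have hε : exp (-(m * p ^ 2 / 2)) ≤ 1 / 2 :=
    calc exp (-(m * p ^ 2 / 2)) ≤ exp (-1) := exp_le_exp.2 (by nlinarith)
      _ ≤ 1 - 1 / 2 := exp_neg_le_one_sub_half zero_le_one le_rfl
      _ = 1 / 2 := by norm_num
  have hkp : 0 ≤ (k : ℝ) * p := by positivity
  have h1 : exp (-(k * p * (1 - exp (-(m * p ^ 2 / 2))))) ≤ exp (-(√N / 8)) :=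
    exp_le_exp.2 (by nlinarith)
  have h2 : exp (-(m * p / 2)) ≤ exp (-(√N / 8)) := exp_le_exp.2 (by nlinarith)
  unfold noPathBound
  linarith

lemma tendsto_sq_mul_exp_neg_sqrt :
    Tendsto (fun n : ℕ => (n : ℝ) ^ 2 * exp (-(√n / 8))) atTop (nhds 0) := by
  have hlim := ((tendsto_pow_mul_exp_neg_atTop_nhds_zero 4).const_mul 4096).comp
    ((tendsto_sqrt_atTop.comp tendsto_natCast_atTop_atTop).atTop_div_const
      (by norm_num : (0 : ℝ) < 8))
  rw [mul_zero] at hlim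
  refine hlim.congr fun n => ?_
  have hs : √(n : ℝ) ^ 4 = (n : ℝ) ^ 2 := by
    rw [show 4 = 2 * 2 from rfl, pow_mul, Real.sq_sqrt (Nat.cast_nonneg n)]
  simp only [Function.comp_apply, div_pow, hs]
  ring

lemma _root_.SimpleGraph.connected_and_dist_le_three_of_forall_adj_adj_adj {V : Type*}
    [Nonempty V] {G : SimpleGraph V}
    (h : ∀ u v, u ≠ v → ∃ w x, G.Adj u w ∧ G.Adj w x ∧ G.Adj x v) :
    G.Connected ∧ ∀ u v, G.dist u v ≤ 3 := by
  have hwalk : ∀ u v, ∃ q : G.Walk u v, q.length ≤ 3 := by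
    intro u v
    by_cases huv : u = v
    · subst huv
      exact ⟨.nil, by simp⟩
    · obtain ⟨w, x, h₁, h₂, h₃⟩ := h u v huv
      exact ⟨.cons h₁ (.cons h₂ (.cons h₃ .nil)), by simp⟩
  refine ⟨(SimpleGraph.connected_iff G).2 ⟨fun u v => ?_, inferInstance⟩, fun u v => ?_⟩
  · obtain ⟨q, -⟩ := hwalk u v
    exact ⟨q⟩
  · obtain ⟨q, hq⟩ := hwalk u v
    exact (SimpleGraph.dist_le q).trans hq

instance (n : ℕ) (p : ℝ) : IsProbabilityMeasure (erMeasure n p) := by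
  unfold erMeasure
  infer_instance

def diamLeThree (n : ℕ) : Set (Sym2 (Fin n) → Bool) :=
  {ω | (graphOf ω).Connected ∧ ∀ u v : Fin n, (graphOf ω).dist u v ≤ 3}

def noThreeWalk (u v : Fin n) : Set (Sym2 (Fin n) → Bool) :=
  {ω | ¬∃ w x, (graphOf ω).Adj u w ∧ (graphOf ω).Adj w x ∧ (graphOf ω).Adj x v}

structure IsSplit (u v : Fin n) (W X : Finset (Fin n)) : Prop where
  ne : u ≠ v
  disjoint : Disjoint W X
  left_notMem : u ∉ W ∪ X
  right_notMem : v ∉ W ∪ X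

def noPathVia (u v : Fin n) (W X : Finset (Fin n)) : Set (Sym2 (Fin n) → Bool) :=
  {ω | ∀ w ∈ W, ∀ x ∈ X, ¬(ω s(u, w) = true ∧ ω s(w, x) = true ∧ ω s(x, v) = true)}

def patternEdges (u v : Fin n) (W X S T : Finset (Fin n)) : Finset (Sym2 (Fin n)) :=
  W.image (s(u, ·)) ∪ X.image (s(·, v)) ∪ (S ×ˢ T).image fun q => s(q.1, q.2)

/-- Together with `patternEdges`, encodes the cylinder event: the neighbours of `u` in `W` are
exactly `S`, those of `v` in `X` are exactly `T`, and there is no edge between `S` and `T`. -/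
def patternValue (u v : Fin n) (S T : Finset (Fin n)) (e : Sym2 (Fin n)) : Bool :=
  decide (e ∈ S.image (s(u, ·)) ∪ T.image (s(·, v)))

variable {u v : Fin n} {W X S T : Finset (Fin n)}

lemma exists_isSplit (huv : u ≠ v) :
    ∃ W X, IsSplit u v W X ∧ #W = (n - 2) / 2 ∧ #X = n - 2 - (n - 2) / 2 := by
  set R : Finset (Fin n) := univ \ {u, v}
  have hR : #R = n - 2 := by
    rw [card_sdiff_of_subset (subset_univ _), card_univ, Fintype.card_fin, card_pair huv]
  obtain ⟨W, hWR, hW⟩ := exists_subset_card_eq (show (n - 2) / 2 ≤ #R by omega)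
  refine ⟨W, R \ W, ⟨huv, disjoint_sdiff, ?_, ?_⟩, hW, by rw [card_sdiff_of_subset hWR, hR, hW]⟩
  all_goals
    rw [union_sdiff_of_subset hWR]
    simp [R]

lemma noThreeWalk_subset_noPathVia (h : IsSplit u v W X) :
    noThreeWalk u v ⊆ noPathVia u v W X := by
  obtain ⟨-, hWX, hu, hv⟩ := h
  intro ω hω w hw x hx ⟨h₁, h₂, h₃⟩
  refine hω ⟨w, x, ?_, ?_, ?_⟩ <;> rw [graphOf, SimpleGraph.fromRel_adj] <;>
    grind [disjoint_left]

lemma patternValue_left (h : IsSplit u v W X) {w : Fin n} (hw : w ∈ W) :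
    patternValue u v S T s(u, w) = decide (w ∈ S) := by
  obtain ⟨hne, -, hu, hv⟩ := h
  simp only [patternValue, mem_union, mem_image, Sym2.eq_iff, decide_eq_decide]
  grind

lemma patternValue_right (h : IsSplit u v W X) {x : Fin n} (hx : x ∈ X) :
    patternValue u v S T s(x, v) = decide (x ∈ T) := by
  obtain ⟨hne, -, hu, hv⟩ := h
  simp only [patternValue, mem_union, mem_image, Sym2.eq_iff, decide_eq_decide]
  grind

lemma patternValue_middle (h : IsSplit u v W X) {w x : Fin n} (hw : w ∈ W) (hx : x ∈ X) :
    patternValue u v S T s(w, x) = false := by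
  obtain ⟨-, -, hu, hv⟩ := h
  simp only [patternValue, mem_union, mem_image, Sym2.eq_iff, decide_eq_false_iff_not]
  grind

lemma noPathVia_subset_iUnion (h : IsSplit u v W X) :
    noPathVia u v W X ⊆ ⋃ ST ∈ W.powerset ×ˢ X.powerset,
      {ω | ∀ e ∈ patternEdges u v W X ST.1 ST.2, ω e = patternValue u v ST.1 ST.2 e} := by
  intro ω hω
  refine Set.mem_iUnion₂.2 ⟨(W.filter fun w => ω s(u, w), X.filter fun x => ω s(x, v)),
    by simp [filter_subset], ?_⟩
  simp only [Set.mem_ofPred_eq, patternEdges, mem_union, mem_image, mem_product]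
  rintro _ ((⟨w, hw, rfl⟩ | ⟨x, hx, rfl⟩) | ⟨⟨w, x⟩, ⟨hwS, hxT⟩, rfl⟩)
  · simp [patternValue_left h hw, hw]
  · simp [patternValue_right h hx, hx]
  · rw [mem_filter] at hwS hxT
    rw [patternValue_middle h hwS.1 hxT.1]
    have := hω w hwS.1 x hxT.1
    simp_all

lemma prod_patternEdges (h : IsSplit u v W X) (hS : S ⊆ W) (hT : T ⊆ X) :
    ∏ e ∈ patternEdges u v W X S T, bernoulliWeight p (patternValue u v S T e)
      = p ^ #S * (1 - p) ^ (#W - #S) * (p ^ #T * (1 - p) ^ (#X - #T))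
          * (1 - p) ^ (#S * #T) := by
  have ⟨hne, hWX, hu, hv⟩ := h
  have hdisj₁ : Disjoint (W.image (s(u, ·))) (X.image (s(·, v))) := by
    simp only [disjoint_left, mem_image]
    grind
  have hdisj₂ : Disjoint (W.image (s(u, ·)) ∪ X.image (s(·, v)))
      ((S ×ˢ T).image fun q => s(q.1, q.2)) := by
    simp only [disjoint_left, mem_union, mem_image, mem_product]
    grind
  have hinj : Set.InjOn (fun q : Fin n × Fin n => s(q.1, q.2)) (S ×ˢ T : Finset _) := by
    intro a ha b hb hab
    simp only [coe_product, Set.mem_prod, mem_coe, Sym2.mk_eq_mk_iff] at ha hb hab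
    rcases hab with rfl | rfl
    · rfl
    · exact absurd (hT hb.2) (disjoint_left.1 hWX (hS ha.1))
  have hleft : ∏ w ∈ W, bernoulliWeight p (patternValue u v S T s(u, w))
      = p ^ #S * (1 - p) ^ (#W - #S) := by
    rw [← prod_bernoulliWeight_decide_mem p hS]
    exact prod_congr rfl fun w hw => by rw [patternValue_left h hw]
  have hright : ∏ x ∈ X, bernoulliWeight p (patternValue u v S T s(x, v))
      = p ^ #T * (1 - p) ^ (#X - #T) := by
    rw [← prod_bernoulliWeight_decide_mem p hT]
    exact prod_congr rfl fun x hx => by rw [patternValue_right h hx]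
  have hmiddle : ∏ q ∈ S ×ˢ T, bernoulliWeight p (patternValue u v S T s(q.1, q.2))
      = (1 - p) ^ (#S * #T) := by
    rw [← card_product, ← prod_const]
    refine prod_congr rfl fun q hq => ?_
    rw [patternValue_middle h (hS (mem_product.1 hq).1) (hT (mem_product.1 hq).2)]
    rfl
  rw [patternEdges, prod_union hdisj₂, prod_union hdisj₁,
    prod_image fun _ _ _ _ => Sym2.congr_right.1, prod_image fun _ _ _ _ => Sym2.congr_left.1,
    prod_image hinj, hleft, hright, hmiddle]

lemma measureReal_noPathVia_le (hp0 : 0 ≤ p) (hp1 : p ≤ 1) (h : IsSplit u v W X) :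
    (erMeasure n p).real (noPathVia u v W X) ≤ noPathBound p #W #X :=
  calc _ ≤ ∑ ST ∈ W.powerset ×ˢ X.powerset, (erMeasure n p).real
          {ω | ∀ e ∈ patternEdges u v W X ST.1 ST.2, ω e = patternValue u v ST.1 ST.2 e} :=
        (measureReal_mono (noPathVia_subset_iUnion h) (measure_ne_top _ _)).trans
          (measureReal_biUnion_finset_le _ _)
    _ = ∑ S ∈ W.powerset, ∑ T ∈ X.powerset,
          p ^ #S * (1 - p) ^ (#W - #S) * (p ^ #T * (1 - p) ^ (#X - #T)) * (1 - p) ^ (#S * #T) := by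
        rw [sum_product]
        refine sum_congr rfl fun S hS => sum_congr rfl fun T hT => ?_
        rw [erMeasure, measureReal_pi_bernoulli_cylinder hp0 hp1,
          prod_patternEdges h (mem_powerset.1 hS) (mem_powerset.1 hT)]
    _ ≤ noPathBound p #W #X := sum_powerset_powerset_le hp0 hp1 W X

lemma measureReal_noThreeWalk_le (hp0 : 0 ≤ p) (hp1 : p ≤ 1) (huv : u ≠ v) :
    (erMeasure n p).real (noThreeWalk u v) ≤ noPathBound p ((n - 2) / 2) (n - 2 - (n - 2) / 2) := by
  obtain ⟨W, X, h, hW, hX⟩ := exists_isSplit huv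
  rw [← hX, ← hW]
  exact (measureReal_mono (noThreeWalk_subset_noPathVia h)).trans
    (measureReal_noPathVia_le hp0 hp1 h)

lemma compl_diamLeThree_subset (hn : 0 < n) :
    (diamLeThree n)ᶜ ⊆ ⋃ uv ∈ (univ : Finset (Fin n)).offDiag, noThreeWalk uv.1 uv.2 := by
  have : Nonempty (Fin n) := ⟨⟨0, hn⟩⟩
  intro ω hω
  contrapose! hω
  rw [Set.notMem_compl_iff]
  simp only [Set.mem_iUnion, mem_offDiag, mem_univ, true_and, not_exists] at hω
  refine SimpleGraph.connected_and_dist_le_three_of_forall_adj_adj_adj (G := graphOf ω)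
    fun u v huv => ?_
  simpa [noThreeWalk] using hω (u, v) huv

lemma measureReal_compl_diamLeThree_le (hn : 6 ≤ n) (hp0 : 0 ≤ p) (hp1 : p ≤ 1)
    (hpn : 8 ≤ p ^ 2 * n) :
    (erMeasure n p).real (diamLeThree n)ᶜ ≤ 2 * n ^ 2 * exp (-(√n / 8)) := by
  have hoff : (#(univ : Finset (Fin n)).offDiag : ℝ) ≤ n ^ 2 := by
    norm_cast
    simp [sq]
  calc _ ≤ ∑ uv ∈ (univ : Finset (Fin n)).offDiag, (erMeasure n p).real (noThreeWalk uv.1 uv.2) :=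
        (measureReal_mono (compl_diamLeThree_subset (by omega)) (measure_ne_top _ _)).trans
          (measureReal_biUnion_finset_le _ _)
    _ ≤ ∑ _uv ∈ (univ : Finset (Fin n)).offDiag, 2 * exp (-(√n / 8)) :=
        sum_le_sum fun uv huv => (measureReal_noThreeWalk_le hp0 hp1 (mem_offDiag.1 huv).2.2).trans
          (noPathBound_le hp0 n.cast_nonneg hpn (by exact_mod_cast (by omega))
            (by exact_mod_cast (by omega)))
    _ ≤ 2 * n ^ 2 * exp (-(√n / 8)) := by
        rw [sum_const, nsmul_eq_mul]
        nlinarith [exp_pos (-(√n / 8))]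

end ErdosRenyi

open ErdosRenyi in
/-- Diameter bound for `G(n,p)`: if `p n ^ 2 * n ≥ log (n² / c)` for a constant
`c > 0`, then with probability at least `1 - e^{-c/2} - o(1)` the graph `G(n, p n)`
is connected with diameter at most `3`. -/
theorem stmt_9 (c : ℝ) (hc : 0 < c) (p : ℕ → ℝ)
    (hp0 : ∀ n, 0 ≤ p n) (hp1 : ∀ n, p n ≤ 1)
    (hpn : ∀ n : ℕ, Real.log ((n : ℝ) ^ 2 / c) ≤ (p n) ^ 2 * n) :
    ∃ g : ℕ → ℝ, Tendsto g atTop (nhds 0) ∧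
      ∀ n : ℕ, 1 - Real.exp (-c / 2) - g n ≤
        (erMeasure n (p n)
          {ω | (graphOf ω).Connected ∧
            ∀ u v : Fin n, (graphOf ω).dist u v ≤ 3}).toReal := by
  have hlog : Tendsto (fun n : ℕ => Real.log ((n : ℝ) ^ 2 / c)) atTop atTop :=
    tendsto_log_atTop.comp
      (((tendsto_pow_atTop two_ne_zero).comp tendsto_natCast_atTop_atTop).atTop_div_const hc)
  have hbound : ∀ᶠ n in atTop,
      (erMeasure n (p n)).real (diamLeThree n)ᶜ ≤ 2 * n ^ 2 * exp (-(√n / 8)) := by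
    filter_upwards [eventually_ge_atTop 6, hlog.eventually_ge_atTop 8] with n hn hlogn
    exact measureReal_compl_diamLeThree_le hn (hp0 n) (hp1 n) (hlogn.trans (hpn n))
  have hlim : Tendsto (fun n : ℕ => 2 * (n : ℝ) ^ 2 * exp (-(√n / 8))) atTop (nhds 0) := by
    simpa [mul_assoc] using tendsto_sq_mul_exp_neg_sqrt.const_mul 2
  refine ⟨fun n => (erMeasure n (p n)).real (diamLeThree n)ᶜ,
    tendsto_of_tendsto_of_tendsto_of_le_of_le' tendsto_const_nhds hlim
      (.of_forall fun _ => measureReal_nonneg) hbound, fun n => ?_⟩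
  change _ - (erMeasure n (p n)).real (diamLeThree n)ᶜ ≤ (erMeasure n (p n)).real (diamLeThree n)
  rw [probReal_compl_eq_one_sub .of_discrete]
  linarith [exp_pos (-c / 2)]
end

section
/- Let $G = G(V, E)$ be a graph where $V = \{x_1, \dots, x_N\}$ are points in a metric space and $\{x_i, x_j\} \in E$ whenever $d(x_i, x_j) \le 2B$. Suppose $f$ maps $V$ to $\mathbb{R}^d$ with $\|f(x_i) - f(x_j)\| \le 2\rho$ for every edge, $G$ is connected with diameter at most $D$, and $d(x_i, x_j) > B$ for non-adjacent pairs. Then the representation variance satisfies $\sigma_f^2 := \frac{1}{2N^2}\sum_{i,j}\|f(x_i)-f(x_j)\|^2 \le \frac{(2\rho D)^2}{2} \le \frac{(2\rho D)^2 }{B^2} \cdot \sigma_x^2$ whenever $\sigma_x^2 := \frac{1}{2N^2}\sum_{i,j} d(x_i,x_j)^2 \ge B^2/2$. -/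
open Finset

lemma walk_bound {X : Type*} [MetricSpace X] {d N : ℕ}
    (x : Fin N → X) (f : X → EuclideanSpace ℝ (Fin d)) {ρ : ℝ} (hρ : 0 ≤ ρ)
    {G : SimpleGraph (Fin N)}
    (hadj : ∀ i j : Fin N, G.Adj i j → ‖f (x i) - f (x j)‖ ≤ 2 * ρ)
    {i j : Fin N} (p : G.Walk i j) :
    ‖f (x i) - f (x j)‖ ≤ 2 * ρ * p.length := by
  induction p with
  | nil => simp
  | cons h p ih =>
    rename_i a b c
    calc ‖f (x a) - f (x c)‖ ≤ ‖f (x a) - f (x b)‖ + ‖f (x b) - f (x c)‖ := by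
          simpa using norm_sub_le_norm_sub_add_norm_sub (f (x a)) (f (x b)) (f (x c))
      _ ≤ 2 * ρ + 2 * ρ * p.length := add_le_add (hadj a b h) ih
      _ = 2 * ρ * (SimpleGraph.Walk.cons h p).length := by
          simp [SimpleGraph.Walk.length_cons]; ring

/-- Variance contraction in the connected-graph regime: points within distance `2B`
form the edges of a graph `G`; the representation distance is at most `2ρ` across
every edge; if `G` is connected with diameter at most `D` and the data variance
`σ_x²` is at least `B²/2`, then the representation variance satisfies
`σ_f² ≤ (2ρD)²/2 ≤ ((2ρD)²/B²) σ_x²`. -/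
theorem stmt_19 {X : Type*} [MetricSpace X] (d N : ℕ) (hN : 0 < N)
    (x : Fin N → X) (f : X → EuclideanSpace ℝ (Fin d))
    (B ρ : ℝ) (hB : 0 < B) (hρ : 0 ≤ ρ) (D : ℕ)
    (G : SimpleGraph (Fin N))
    (hG : G = SimpleGraph.fromRel fun i j => dist (x i) (x j) ≤ 2 * B)
    (hedge : ∀ i j : Fin N, dist (x i) (x j) ≤ 2 * B →
      ‖f (x i) - f (x j)‖ ≤ 2 * ρ)
    (hconn : G.Connected) (hdiam : ∀ i j : Fin N, G.dist i j ≤ D)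
    (hfar : ∀ i j : Fin N, i ≠ j → ¬ G.Adj i j → B < dist (x i) (x j))
    (hvar : B ^ 2 / 2 ≤ (1 / (2 * (N : ℝ) ^ 2)) * ∑ i, ∑ j, dist (x i) (x j) ^ 2) :
    (1 / (2 * (N : ℝ) ^ 2)) * ∑ i, ∑ j, ‖f (x i) - f (x j)‖ ^ 2
        ≤ (2 * ρ * (D : ℝ)) ^ 2 / 2 ∧
    (1 / (2 * (N : ℝ) ^ 2)) * ∑ i, ∑ j, ‖f (x i) - f (x j)‖ ^ 2
        ≤ ((2 * ρ * (D : ℝ)) ^ 2 / B ^ 2) *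
          ((1 / (2 * (N : ℝ) ^ 2)) * ∑ i, ∑ j, dist (x i) (x j) ^ 2) := by
  have hadj : ∀ i j : Fin N, G.Adj i j → ‖f (x i) - f (x j)‖ ≤ 2 * ρ := by
    intro i j hij
    rw [hG] at hij
    rcases hij.2 with h | h
    · exact hedge i j h
    · rw [norm_sub_rev]; exact hedge j i h
  -- pointwise bound
  have key : ∀ i j : Fin N, ‖f (x i) - f (x j)‖ ≤ 2 * ρ * D := by
    intro i j
    obtain ⟨p, hp⟩ := (hconn i j).exists_walk_length_eq_dist
    calc ‖f (x i) - f (x j)‖ ≤ 2 * ρ * p.length := walk_bound x f hρ hadj p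
      _ ≤ 2 * ρ * D := by
          apply mul_le_mul_of_nonneg_left _ (by positivity)
          exact_mod_cast hp ▸ hdiam i j
  have hNpos : (0:ℝ) < (N:ℝ)^2 := by positivity
  have h1 : (1 / (2 * (N : ℝ) ^ 2)) * ∑ i, ∑ j, ‖f (x i) - f (x j)‖ ^ 2
      ≤ (2 * ρ * (D : ℝ)) ^ 2 / 2 := by
    have hsum : ∑ i : Fin N, ∑ j : Fin N, ‖f (x i) - f (x j)‖ ^ 2
        ≤ (N:ℝ)^2 * (2 * ρ * D)^2 := by
      calc ∑ i : Fin N, ∑ j : Fin N, ‖f (x i) - f (x j)‖ ^ 2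
          ≤ ∑ _i : Fin N, ∑ _j : Fin N, (2 * ρ * D)^2 := by
            apply Finset.sum_le_sum; intro i _
            apply Finset.sum_le_sum; intro j _
            exact pow_le_pow_left₀ (norm_nonneg _) (key i j) 2
        _ = (N:ℝ)^2 * (2 * ρ * D)^2 := by simp [Finset.sum_const]; ring
    calc (1 / (2 * (N : ℝ) ^ 2)) * ∑ i, ∑ j, ‖f (x i) - f (x j)‖ ^ 2
        ≤ (1 / (2 * (N : ℝ) ^ 2)) * ((N:ℝ)^2 * (2 * ρ * D)^2) := by
          apply mul_le_mul_of_nonneg_left hsum (by positivity)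
      _ = (2 * ρ * (D : ℝ)) ^ 2 / 2 := by field_simp
  refine ⟨h1, h1.trans ?_⟩
  have h2 : (2 * ρ * (D : ℝ)) ^ 2 / 2 = ((2 * ρ * (D : ℝ)) ^ 2 / B ^ 2) * (B^2/2) := by
    field_simp
  rw [h2]
  exact mul_le_mul_of_nonneg_left hvar (by positivity)
end
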